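/- arXiv:2104.06713 — 10 statements merged into one kernel-verified Lean document; each statement's English description precedes it below -/
import Mathlib

section
/- If A and B are left ω-narrow subsets of a topological group X, then the pointwise product AB = {ab : a ∈ A, b ∈ B} is a left ω-narrow subset of X. -/
open Pointwise

/-- A subset `A` of a topological group `X` is left ω-narrow if for each neighborhood `U`
of the identity there is a countable `C ⊆ X` with `A ⊆ ⋃ c ∈ C, c • U`. -/
def LeftOmegaNarrow {X : Type*} [Group X] [TopologicalSpace X] (A : Set X) : Prop :=
  ∀ U ∈ nhds (1 : X), ∃ C : Set X, C.Countable ∧ A ⊆ ⋃ c ∈ C, (fun u => c * u) '' U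

/-! Given `U`, pick a neighborhood `V` of `1` with `V * V ⊆ U` and a countable `D` with
`B ⊆ D * V`. Right translates of a left ω-narrow set are left ω-narrow, because conjugation
fixes `1` and so carries neighborhoods of `1` to neighborhoods of `1`; hence the countable union
`A * D` of the translates `A * d` is left ω-narrow, say `A * D ⊆ C * V`. Then
`A * B ⊆ A * D * V ⊆ C * (V * V) ⊆ C * U`. -/

section

open Set Filter Topology

variable {X : Type*} [Group X] [TopologicalSpace X]

theorem leftOmegaNarrow_iff_subset_mul {A : Set X} :
    LeftOmegaNarrow A ↔ ∀ U ∈ 𝓝 (1 : X), ∃ C : Set X, C.Countable ∧ A ⊆ C * U := by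
  simp only [LeftOmegaNarrow, iUnion_mul_left_image]

namespace LeftOmegaNarrow

theorem biUnion {ι : Type*} {s : Set ι} {f : ι → Set X} (hs : s.Countable)
    (hf : ∀ i ∈ s, LeftOmegaNarrow (f i)) : LeftOmegaNarrow (⋃ i ∈ s, f i) := by
  simp only [leftOmegaNarrow_iff_subset_mul] at hf ⊢
  intro U hU
  choose! C hCc hfC using fun i hi => hf i hi U hU
  refine ⟨⋃ i ∈ s, C i, hs.biUnion hCc, iUnion₂_subset fun i hi => ?_⟩
  exact (hfC i hi).trans (mul_subset_mul_right (subset_biUnion_of_mem hi))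

theorem image_mul_right [ContinuousMul X] {A : Set X} (hA : LeftOmegaNarrow A) (d : X) :
    LeftOmegaNarrow ((· * d) '' A) := by
  rw [leftOmegaNarrow_iff_subset_mul] at hA ⊢
  intro U hU
  have hconj : Tendsto (fun x : X => d⁻¹ * x * d) (𝓝 1) (𝓝 1) :=
    ((continuous_const_mul d⁻¹).mul_const d).tendsto' 1 1 (by group)
  obtain ⟨C, hCc, hAC⟩ := hA _ (hconj hU)
  refine ⟨(· * d) '' C, hCc.image _, ?_⟩
  rintro _ ⟨_, hcw, rfl⟩
  obtain ⟨c, hc, w, hw, rfl⟩ := hAC hcw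
  exact ⟨c * d, mem_image_of_mem _ hc, d⁻¹ * w * d, hw, by group⟩

theorem mul_of_countable [ContinuousMul X] {A D : Set X} (hA : LeftOmegaNarrow A)
    (hD : D.Countable) : LeftOmegaNarrow (A * D) := by
  rw [← iUnion_mul_right_image]
  exact biUnion hD fun d _ => hA.image_mul_right d

end LeftOmegaNarrow

end

theorem leftOmegaNarrow_mul {X : Type*} [Group X] [TopologicalSpace X] [IsTopologicalGroup X]
    (A B : Set X) (hA : LeftOmegaNarrow A) (hB : LeftOmegaNarrow B) :
    LeftOmegaNarrow (A * B) := by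
  rw [leftOmegaNarrow_iff_subset_mul] at hB ⊢
  intro U hU
  obtain ⟨V, hVo, hV1, hVU⟩ := exists_open_nhds_one_mul_subset hU
  have hV : V ∈ nhds (1 : X) := hVo.mem_nhds hV1
  obtain ⟨D, hDc, hBD⟩ := hB V hV
  obtain ⟨C, hCc, hADC⟩ :=
    leftOmegaNarrow_iff_subset_mul.mp (hA.mul_of_countable hDc) V hV
  refine ⟨C, hCc, ?_⟩
  calc A * B ⊆ A * (D * V) := Set.mul_subset_mul_left hBD
    _ = A * D * V := (mul_assoc _ _ _).symm
    _ ⊆ C * V * V := Set.mul_subset_mul_right hADC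
    _ = C * (V * V) := mul_assoc _ _ _
    _ ⊆ C * U := Set.mul_subset_mul_left hVU
end

section
/- Let f : X → Z be a surjective perfect map between Hausdorff topological spaces. If X is co-Namioka, then Z is co-Namioka. -/
universe u v

/-- A topological space `X` is co-Namioka if for every Baire space `Y` and every separately
continuous function `f : X × Y → ℝ` there is a dense `G_δ` set `G ⊆ Y` such that `f` is
continuous at each point of `X × G`. -/
def CoNamioka (X : Type u) [TopologicalSpace X] : Prop :=
  ∀ (Y : Type v) (_ : TopologicalSpace Y), BaireSpace Y →
    ∀ f : X × Y → ℝ, (∀ x, Continuous fun y => f (x, y)) →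
      (∀ y, Continuous fun x => f (x, y)) →
      ∃ G : Set Y, Dense G ∧ IsGδ G ∧ ∀ x : X, ∀ y ∈ G, ContinuousAt f (x, y)

theorem coNamioka_of_perfect_image {X : Type u} {Z : Type u}
    [TopologicalSpace X] [TopologicalSpace Z] [T2Space X] [T2Space Z]
    (f : X → Z) (hcont : Continuous f) (hclosed : IsClosedMap f)
    (hfib : ∀ z : Z, IsCompact (f ⁻¹' {z})) (hsurj : Function.Surjective f)
    (hX : CoNamioka.{u,v} X) : CoNamioka.{u,v} Z := by
  intro Y tY hBaire g hg1 hg2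
  obtain ⟨G, hGd, hGδ, hGc⟩ := hX Y tY hBaire (fun p => g (f p.1, p.2))
    (fun x => hg1 (f x))
    (fun y => (hg2 y).comp hcont)
  refine ⟨G, hGd, hGδ, fun z y hy => ?_⟩
  rw [ContinuousAt, Metric.tendsto_nhds]
  intro ε hε
  set K := f ⁻¹' {z} with hK
  have key : ∀ x ∈ K, ∃ UV : Set X × Set Y, IsOpen UV.1 ∧ x ∈ UV.1 ∧ IsOpen UV.2 ∧ y ∈ UV.2 ∧
      ∀ p ∈ UV.1 ×ˢ UV.2, dist (g (f p.1, p.2)) (g (z, y)) < ε := by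
    intro x hx
    have hz : f x = z := hx
    have h1 := hGc x y hy
    rw [ContinuousAt, Metric.tendsto_nhds] at h1
    have h2 := h1 ε hε
    rw [Filter.eventually_iff, mem_nhds_prod_iff'] at h2
    obtain ⟨U, V, hU, hxU, hV, hyV, hUV⟩ := h2
    refine ⟨(U, V), hU, hxU, hV, hyV, fun p hp => ?_⟩
    have := hUV hp
    simpa [hz] using this
  choose! UV hU hmemU hV hmemV hUV using key
  obtain ⟨t, _htK, htcov⟩ := (hfib z).elim_nhds_subcover (fun x => (UV x).1)
    (fun x hx => ((hU x hx).mem_nhds (hmemU x hx)))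
  -- t : Finset X, each element in K
  set Utot : Set X := ⋃ x ∈ t, (UV x).1 with hUtot
  set Vtot : Set Y := ⋂ x ∈ t, (UV x).2 with hVtot
  have hVopen : IsOpen Vtot := isOpen_biInter_finset (fun x hx => hV x (_htK x hx))
  have hyVtot : y ∈ Vtot := Set.mem_biInter (fun x hx => hmemV x (_htK x hx))
  set W : Set Z := (f '' Utotᶜ)ᶜ with hW
  have hWopen : IsOpen W := (hclosed _ (isOpen_biUnion fun x hx => hU x (_htK x hx)).isClosed_compl).isOpen_compl
  have hzW : z ∈ W := by
    intro hzmem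
    obtain ⟨x, hx, hfx⟩ := hzmem
    exact hx (htcov hfx)
  have hmem : (W ×ˢ Vtot) ∈ nhds (z, y) :=
    prod_mem_nhds (hWopen.mem_nhds hzW) (hVopen.mem_nhds hyVtot)
  filter_upwards [hmem] with p hp
  obtain ⟨x', hx'⟩ := hsurj p.1
  have hx'U : x' ∈ Utot := by
    by_contra hc
    exact hp.1 ⟨x', hc, hx'⟩
  obtain ⟨x₀, hx₀t, hx'i⟩ : ∃ x₀ ∈ t, x' ∈ (UV x₀).1 := by
    simpa [hUtot] using hx'U
  have hp2 : p.2 ∈ (UV x₀).2 := by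
    have := hp.2
    rw [hVtot] at this
    simp only [Set.mem_iInter] at this; exact this x₀ hx₀t
  have := hUV x₀ (_htK x₀ hx₀t) (x', p.2) ⟨hx'i, hp2⟩
  simpa [hx'] using this
end

section
/- Every Lindelöf Hausdorff space X that is locally dyadic (each point has a closed neighborhood that is a continuous image of some Cantor cube {0,1}^κ) is co-Namioka, assuming every dyadic compact space is co-Namioka and that countable intersections of dense G_δ sets in a Baire space are dense G_δ. -/
universe u v

/-- A compact Hausdorff space is dyadic if it is a continuous image of a Cantor cube. -/
def IsDyadicCompact (K : Type u) [TopologicalSpace K] : Prop :=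
  CompactSpace K ∧ T2Space K ∧
    ∃ (κ : Type u) (f : (κ → Bool) → K), Continuous f ∧ Function.Surjective f

theorem coNamioka_of_lindelof_locallyDyadic (X : Type u) [TopologicalSpace X] [T2Space X]
    [LindelofSpace X]
    (hloc : ∀ x : X, ∃ K : Set X, K ∈ nhds x ∧ IsClosed K ∧ IsDyadicCompact K)
    (hdyadic : ∀ (K : Type u) (_ : TopologicalSpace K), IsDyadicCompact K → CoNamioka.{u,v} K)
    (hGδ : ∀ (Y : Type v) (_ : TopologicalSpace Y), BaireSpace Y →
      ∀ S : Set (Set Y), S.Countable → (∀ s ∈ S, Dense s ∧ IsGδ s) →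
        Dense (⋂₀ S) ∧ IsGδ (⋂₀ S)) :
    CoNamioka.{u,v} X := by
  intro Y _ hY f hf1 hf2
  choose K hKmem hKcl hKdy using hloc
  -- countable subcover by interiors
  have hcov : (Set.univ : Set X) ⊆ ⋃ x, interior (K x) := by
    intro x _
    exact Set.mem_iUnion.2 ⟨x, mem_interior_iff_mem_nhds.2 (hKmem x)⟩
  obtain ⟨t, htc, htcov⟩ := isLindelof_univ.elim_countable_subcover
    (fun x => interior (K x)) (fun x => isOpen_interior) hcov
  -- restricted functions
  have hG : ∀ i : X, ∃ G : Set Y, Dense G ∧ IsGδ G ∧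
      ∀ k : ↥(K i), ∀ y ∈ G, ContinuousAt (fun p : ↥(K i) × Y => f (p.1.1, p.2)) (k, y) := by
    intro i
    refine hdyadic ↥(K i) _ (hKdy i) Y _ hY (fun p : ↥(K i) × Y => f (p.1.1, p.2)) ?_ ?_
    · intro k; exact hf1 k.1
    · intro y; exact (hf2 y).comp continuous_subtype_val
  choose G hGd hGgδ hGc using hG
  have hS : (G '' t).Countable := htc.image G
  obtain ⟨hdense, hgδ⟩ := hGδ Y _ hY (G '' t) hS (by
    rintro s ⟨i, _, rfl⟩; exact ⟨hGd i, hGgδ i⟩)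
  refine ⟨⋂₀ (G '' t), hdense, hgδ, ?_⟩
  intro x y hy
  obtain ⟨_, ⟨i, rfl⟩, hmem⟩ := htcov (Set.mem_univ x)
  obtain ⟨hi, hxint⟩ : i ∈ t ∧ x ∈ interior (K i) := by
    simpa using hmem
  have hxK : x ∈ K i := interior_subset hxint
  have hyG : y ∈ G i := hy (G i) ⟨i, hi, rfl⟩
  have hcont : ContinuousAt (fun p : ↥(K i) × Y => f (p.1.1, p.2)) (⟨x, hxK⟩, y) :=
    hGc i ⟨x, hxK⟩ y hyG
  -- upgrade to continuity at (x, y)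
  set s : Set (X × Y) := (K i) ×ˢ (Set.univ : Set Y) with hs
  have hsmem : s ∈ nhds (x, y) := by
    refine Filter.inter_mem ?_ ?_
    · exact Filter.mem_of_superset
        (continuous_fst.continuousAt.preimage_mem_nhds
          (Filter.mem_of_superset (isOpen_interior.mem_nhds hxint) interior_subset))
        (fun p hp => hp)
    · exact Filter.univ_mem' (fun p => Set.mem_univ _)
  have hpmem : (x, y) ∈ s := ⟨hxK, Set.mem_univ _⟩
  have hφ : Continuous (fun q : ↥s => ((⟨q.1.1, q.2.1⟩ : ↥(K i)), q.1.2)) := by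
    refine Continuous.prodMk ?_ ?_
    · exact Continuous.subtype_mk (continuous_fst.comp continuous_subtype_val) _
    · exact continuous_snd.comp continuous_subtype_val
  have hrestrict : ContinuousAt (s.restrict f) ⟨(x, y), hpmem⟩ := by
    have : s.restrict f =
        (fun p : ↥(K i) × Y => f (p.1.1, p.2)) ∘
          (fun q : ↥s => ((⟨q.1.1, q.2.1⟩ : ↥(K i)), q.1.2)) := by
      funext q; rfl
    rw [this]
    exact ContinuousAt.comp (x := (⟨(x, y), hpmem⟩ : ↥s)) hcont hφ.continuousAt
  have hwithin : ContinuousWithinAt f s (x, y) :=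
    (continuousWithinAt_iff_continuousAt_restrict f hpmem).2 hrestrict
  exact (continuousWithinAt_iff_continuousAt hsmem).1 hwithin
end

section
/- Let X be a Baire topological group, Z a topological group, and h : X → Z a group homomorphism such that h(X) is ω-narrow in Z and the preimage under h of every functionally open neighborhood of the identity in Z is an F_σ set in X. Then h is continuous. -/
/-- A subset `A` of a topological group `Z` is ω-narrow if for every neighborhood `U` of the
identity there is a countable `C ⊆ Z` with `A ⊆ ⋃ c ∈ C, c • U` and `A ⊆ ⋃ c ∈ C, U • c`. -/
def OmegaNarrowSet {Z : Type*} [Group Z] [TopologicalSpace Z] (A : Set Z) : Prop :=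
  ∀ U ∈ nhds (1 : Z), ∃ C : Set Z, C.Countable ∧
    A ⊆ (⋃ c ∈ C, (fun u => c * u) '' U) ∧ A ⊆ ⋃ c ∈ C, (fun u => u * c) '' U

/-- A set is Fσ if it is a countable union of closed sets. -/
def IsFsigma {X : Type*} [TopologicalSpace X] (S : Set X) : Prop :=
  ∃ F : ℕ → Set X, (∀ n, IsClosed (F n)) ∧ S = ⋃ n, F n

/-!
Given a neighbourhood `W` of `1` in `Z`, choose a functionally open neighbourhood `V` of `1`
with `V / V ⊆ W`. Its preimage `B = h⁻¹(V)` is Fσ, so it has the Baire property. Since `h(X)`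
is ω-narrow, countably many translates of `B` cover `X`, so `B` is not meagre in the Baire space
`X`. By Pettis' theorem `B / B ⊆ h⁻¹(W)` is then a neighbourhood of `1`, i.e. `h` is continuous
at `1`.
-/

open Filter Set Topology
open scoped Pointwise

instance IsTopologicalGroup.toCompletelyRegularSpace {G : Type*} [Group G] [TopologicalSpace G]
    [IsTopologicalGroup G] : CompletelyRegularSpace G :=
  .of_exists_uniformSpace ⟨IsTopologicalGroup.rightUniformSpace G, rfl⟩

theorem exists_functionallyOpen_nhds_subset {Z : Type*} [TopologicalSpace Z]
    [CompletelyRegularSpace Z] {z : Z} {W : Set Z} (hW : W ∈ 𝓝 z) :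
    ∃ ξ : Z → ℝ, Continuous ξ ∧ (∀ y, 0 ≤ ξ y ∧ ξ y ≤ 1) ∧
      {y | 0 < ξ y} ∈ 𝓝 z ∧ {y | 0 < ξ y} ⊆ W := by
  obtain ⟨U, hUW, hU, hzU⟩ := mem_nhds_iff.1 hW
  obtain ⟨f, hf, hfz, hfU⟩ :=
    CompletelyRegularSpace.completely_regular z Uᶜ hU.isClosed_compl (not_not_intro hzU)
  refine ⟨fun y => 1 - (f y : ℝ), continuous_const.sub (continuous_subtype_val.comp hf),
    fun y => ⟨by linarith [(f y).2.2], by linarith [(f y).2.1]⟩, ?_, ?_⟩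
  · refine (isOpen_lt continuous_const
      (continuous_const.sub (continuous_subtype_val.comp hf))).mem_nhds ?_
    simp [hfz]
  · intro y hy
    by_contra hyW
    have : (f y : ℝ) = 1 := congrArg Subtype.val (hfU fun hyU => hyW (hUW hyU))
    simp only [mem_ofPred_eq, this, sub_self, lt_self_iff_false] at hy

theorem IsFsigma.baireMeasurableSet {X : Type*} [TopologicalSpace X] {S : Set X}
    (hS : IsFsigma S) : BaireMeasurableSet S := by
  obtain ⟨F, hF, rfl⟩ := hS
  exact .iUnion fun n => .of_compl (hF n).isOpen_compl.baireMeasurableSet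

/-- Pettis' theorem. -/
theorem BaireMeasurableSet.div_mem_nhds_one_of_not_isMeagre {G : Type*} [Group G]
    [TopologicalSpace G] [ContinuousMul G] [BaireSpace G] {A : Set G}
    (hA : BaireMeasurableSet A) (hA' : ¬ IsMeagre A) : A / A ∈ 𝓝 1 := by
  obtain ⟨U, hU, hAU⟩ := hA.residualEq_isOpen
  obtain ⟨x₀, hx₀⟩ : U.Nonempty := by
    rw [nonempty_iff_ne_empty]
    rintro rfl
    exact hA' (eventuallyEq_empty.1 hAU)
  have hN : {z : G | z * x₀ ∈ U} ∈ 𝓝 1 :=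
    (hU.preimage (continuous_mul_const x₀)).mem_nhds (by simpa using hx₀)
  refine mem_of_superset hN fun z hz => ?_
  -- `A ∩ z A` is residually equal to the nonempty open set `U ∩ z U`, hence nonempty.
  have hO : IsOpen (U ∩ (z⁻¹ * ·) ⁻¹' U) := hU.inter (hU.preimage (continuous_const_mul _))
  have hOne : (U ∩ (z⁻¹ * ·) ⁻¹' U).Nonempty := ⟨z * x₀, hz, by simpa using hx₀⟩
  have hEq : (A ∩ (z⁻¹ * ·) ⁻¹' A : Set G) =ᶠ[residual G] (U ∩ (z⁻¹ * ·) ⁻¹' U : Set G) :=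
    hAU.inter <| (tendsto_residual_of_isOpenMap (continuous_const_mul z⁻¹)
      (Homeomorph.mulLeft z⁻¹).isOpenMap).eventually hAU
  obtain ⟨y, hyO, hyEq⟩ := (dense_of_mem_residual hEq).inter_open_nonempty _ hO hOne
  have hyA : y ∈ A ∩ (z⁻¹ * ·) ⁻¹' A := Eq.mpr hyEq hyO
  exact ⟨y, hyA.1, z⁻¹ * y, hyA.2, by simp [div_eq_mul_inv]⟩

theorem OmegaNarrowSet.exists_countable_biUnion_preimage_eq_univ {X Z : Type*} [Group X]
    [Group Z] [TopologicalSpace Z] [IsTopologicalGroup Z] {h : X →* Z}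
    (hnarrow : OmegaNarrowSet (range h)) {V : Set Z} (hV : V ∈ 𝓝 1) :
    ∃ D : Set X, D.Countable ∧ ⋃ d ∈ D, (· * d) ⁻¹' (h ⁻¹' V) = univ := by
  obtain ⟨U, hU, hUV⟩ := exists_nhds_split_inv hV
  obtain ⟨C, hC, -, hcover⟩ := hnarrow U hU
  have hpick : ∀ c : Z, ∃ d : X, ∀ x, h x ∈ (· * c) '' U → h (x * d) ∈ V := by
    intro c
    by_cases hc : ∃ x₀, h x₀ ∈ (· * c) '' U
    · obtain ⟨x₀, u₀, hu₀, hx₀⟩ := hc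
      refine ⟨x₀⁻¹, fun x ⟨u, hu, hx⟩ => ?_⟩
      rw [map_mul, map_inv, ← hx, ← hx₀]
      simpa [mul_assoc, div_eq_mul_inv] using hUV u hu u₀ hu₀
    · exact ⟨1, fun x hx => (hc ⟨x, hx⟩).elim⟩
  choose d hd using hpick
  refine ⟨d '' C, hC.image d, eq_univ_of_forall fun x => ?_⟩
  obtain ⟨c, hcC, hxc⟩ := mem_iUnion₂.1 (hcover (mem_range_self x))
  exact mem_biUnion (mem_image_of_mem d hcC) (hd c x hxc)

theorem OmegaNarrowSet.not_isMeagre_preimage {X Z : Type*} [Group X] [TopologicalSpace X]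
    [ContinuousMul X] [BaireSpace X] [Group Z] [TopologicalSpace Z] [IsTopologicalGroup Z]
    {h : X →* Z} (hnarrow : OmegaNarrowSet (range h)) {V : Set Z} (hV : V ∈ 𝓝 1) :
    ¬ IsMeagre (h ⁻¹' V) := by
  intro hB
  obtain ⟨D, hD, hcover⟩ := hnarrow.exists_countable_biUnion_preimage_eq_univ hV
  refine not_isMeagre_of_isOpen (isOpen_univ (X := X)) univ_nonempty ?_
  rw [← hcover]
  exact isMeagre_biUnion hD fun d _ =>
    hB.preimage_of_isOpenMap (continuous_mul_const d) (Homeomorph.mulRight d).isOpenMap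

theorem continuous_of_baire_omegaNarrow {X Z : Type*}
    [Group X] [TopologicalSpace X] [IsTopologicalGroup X] [BaireSpace X]
    [Group Z] [TopologicalSpace Z] [IsTopologicalGroup Z]
    (h : X →* Z) (hnarrow : OmegaNarrowSet (Set.range h))
    (hFσ : ∀ W : Set Z, W ∈ nhds (1 : Z) →
      (∃ ξ : Z → ℝ, Continuous ξ ∧ (∀ z, 0 ≤ ξ z ∧ ξ z ≤ 1) ∧ W = {z | 0 < ξ z}) →
      IsFsigma (⇑h ⁻¹' W)) :
    Continuous h := by
  refine continuous_of_continuousAt_one h ?_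
  rw [ContinuousAt, map_one, tendsto_def]
  intro W hW
  obtain ⟨W₁, hW₁, hW₁W⟩ := exists_nhds_split_inv hW
  obtain ⟨ξ, hξ, hξ01, hV, hVW₁⟩ := exists_functionallyOpen_nhds_subset hW₁
  have hB := (hFσ _ hV ⟨ξ, hξ, hξ01, rfl⟩).baireMeasurableSet
  refine mem_of_superset (hB.div_mem_nhds_one_of_not_isMeagre (hnarrow.not_isMeagre_preimage hV)) ?_
  rintro _ ⟨a, ha, b, hb, rfl⟩
  simpa using hW₁W _ (hVW₁ ha) _ (hVW₁ hb)
end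

section
/- Let X be a Baire topological group with identity e, and A ⊆ X a non-meager F_σ subset such that X = C·A for some countable set C ⊆ X. Then A·A⁻¹ is a neighborhood of e. -/
open Pointwise Set Filter Topology

theorem exists_not_isMeagre_of_not_isMeagre_iUnion {X ι : Type*} [TopologicalSpace X] [Countable ι]
    {F : ι → Set X} (h : ¬ IsMeagre (⋃ i, F i)) : ∃ i, ¬ IsMeagre (F i) := by
  contrapose! h
  exact isMeagre_iUnion h

theorem IsClosed.interior_nonempty_of_not_isMeagre {X : Type*} [TopologicalSpace X] {s : Set X}
    (hs : IsClosed s) (h : ¬ IsMeagre s) : (interior s).Nonempty := by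
  rw [nonempty_iff_ne_empty]
  intro hempty
  exact h (hs.isNowhereDense_iff.2 hempty).isMeagre

theorem mul_inv_mem_nhds_one_of_interior_nonempty {G : Type*} [Group G] [TopologicalSpace G]
    [ContinuousConstSMul Gᵐᵒᵖ G] {s : Set G} (hs : (interior s).Nonempty) : s * s⁻¹ ∈ 𝓝 1 := by
  obtain ⟨x, hx⟩ := hs
  exact mem_interior_iff_mem_nhds.1 <|
    subset_interior_mul_left ⟨x, hx, x⁻¹, inv_mem_inv.2 (interior_subset hx), mul_inv_cancel x⟩

theorem pettis_step_general {X : Type*} [Group X] [TopologicalSpace X] [IsTopologicalGroup X]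
    (A : Set X) (hmeagre : ¬ IsMeagre A)
    (hFσ : ∃ F : ℕ → Set X, (∀ n, IsClosed (F n)) ∧ A = ⋃ n, F n) :
    A * A⁻¹ ∈ nhds (1 : X) := by
  obtain ⟨F, hclosed, rfl⟩ := hFσ
  obtain ⟨n, hn⟩ := exists_not_isMeagre_of_not_isMeagre_iUnion hmeagre
  have hinterior : (interior (F n)).Nonempty := (hclosed n).interior_nonempty_of_not_isMeagre hn
  exact mem_of_superset (mul_inv_mem_nhds_one_of_interior_nonempty hinterior) <|
    mul_subset_mul (subset_iUnion F n) (inv_subset_inv.2 (subset_iUnion F n))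

theorem pettis_step {X : Type*} [Group X] [TopologicalSpace X] [IsTopologicalGroup X]
    [BaireSpace X] (A : Set X) (hmeagre : ¬ IsMeagre A)
    (hFσ : ∃ F : ℕ → Set X, (∀ n, IsClosed (F n)) ∧ A = ⋃ n, F n)
    (hcover : ∃ C : Set X, C.Countable ∧ C * A = Set.univ) :
    A * A⁻¹ ∈ nhds (1 : X) :=
  pettis_step_general A hmeagre hFσ
end

section
/- Let T be a topological space, X a Baire topological group, Y a topological group, K ⊆ T a compact co-Namioka subspace, and h : T × X → Y a separately continuous map such that for every t ∈ T the map x ↦ h(t,x) is a group homomorphism. Then the restriction of h to K × X is jointly continuous. -/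
/-!
Fix `t₀ ∈ K`. Topological groups are completely regular, so for a neighbourhood `W` of `1` some
continuous `f : Y → [0,1]` vanishes at `1` and equals `1` off `W`. The co-Namioka property applied
to `(t, x) ↦ f (h (t, x) / h (t₀, x))` yields a `g` with `h (t, x) / h (t₀, x) ∈ W` for `(t, x)`
near `(t₀, g)`. As each `h (t, ·)` is a homomorphism, translating by `g` turns this into continuity
of `h` at `(t₀, 1)`, and translating by `x₀` into continuity at `(t₀, x₀)`.
-/

universe u v

open Filter Set Topology

instance IsTopologicalGroup.completelyRegularSpace (G : Type*) [Group G] [TopologicalSpace G]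
    [IsTopologicalGroup G] : CompletelyRegularSpace G :=
  .of_exists_uniformSpace ⟨IsTopologicalGroup.rightUniformSpace G, rfl⟩

section

variable {T X Y : Type*} [TopologicalSpace T] [TopologicalSpace X] [TopologicalSpace Y]

/-- For each neighbourhood `W` of `1`, the maps `h (·, x)` with `x` near some `g` are
`W`-equicontinuous at `t₀` for the right uniformity of `Y`. -/
def SomewhereEquicontinuousAt [Group Y] (h : T × X → Y) (t₀ : T) : Prop :=
  ∀ W ∈ 𝓝 (1 : Y), ∃ g : X, ∀ᶠ p in 𝓝 (t₀, g), h p / h (t₀, p.2) ∈ W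

theorem SomewhereEquicontinuousAt.continuousAt_one [Group X] [ContinuousMul X] [Group Y]
    [IsTopologicalGroup Y] {h : T × X → Y} {t₀ : T} (hequi : SomewhereEquicontinuousAt h t₀)
    (hcont : ContinuousAt (fun x => h (t₀, x)) 1)
    (hhom : ∀ t x₁ x₂, h (t, x₁ * x₂) = h (t, x₁) * h (t, x₂)) :
    ContinuousAt h (t₀, 1) := by
  have h_one : h (t₀, 1) = 1 := by simpa using hhom t₀ 1 1
  rw [ContinuousAt, h_one]
  intro N hN
  obtain ⟨V, hV, hVN⟩ := exists_nhds_one_split hN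
  obtain ⟨W, hW, hWV⟩ := exists_nhds_split_inv hV
  obtain ⟨g, hg⟩ := hequi (V ∩ W) (inter_mem hV hW)
  have hshift : Tendsto (fun p : T × X => (p.1, p.2 * g)) (𝓝 (t₀, 1)) (𝓝 (t₀, g)) :=
    (continuous_fst.prodMk (continuous_snd.mul continuous_const)).tendsto' _ _ (by simp)
  have hconst : Tendsto (fun p : T × X => (p.1, g)) (𝓝 (t₀, 1)) (𝓝 (t₀, g)) :=
    (continuous_fst.prodMk continuous_const).tendsto (t₀, 1)
  have hnear_g : ∀ᶠ p : T × X in 𝓝 (t₀, 1), h (p.1, p.2 * g) / h (t₀, p.2 * g) ∈ V :=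
    hshift.eventually (hg.mono fun _ hp => hp.1)
  have hat_g : ∀ᶠ p : T × X in 𝓝 (t₀, 1), h (p.1, g) / h (t₀, g) ∈ W :=
    hconst.eventually (hg.mono fun _ hp => hp.2)
  have hnear_one : ∀ᶠ p : T × X in 𝓝 (t₀, 1), h (t₀, p.2) ∈ W :=
    (hcont.comp (x := (t₀, (1 : X))) continuousAt_snd).eventually_mem
      (by rwa [Function.comp_apply, h_one])
  rw [mem_map]
  filter_upwards [hnear_g, hat_g, hnear_one] with ⟨t, x⟩ ha hb hc
  have htranslate :
      h (t, x) = h (t, x * g) / h (t₀, x * g) * (h (t₀, x) / (h (t, g) / h (t₀, g))) := by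
    simp only [hhom, div_eq_mul_inv, mul_inv_rev, inv_inv, mul_assoc, inv_mul_cancel_left,
      mul_inv_cancel, mul_one]
  show h (t, x) ∈ N
  rw [htranslate]
  exact hVN _ ha _ (hWV _ hc _ hb)

theorem continuous_of_continuousAt_one_of_map_mul [Group X] [ContinuousMul X] [Mul Y]
    [ContinuousMul Y]
    {h : T × X → Y} (hcont : ∀ x, Continuous fun t => h (t, x))
    (hhom : ∀ t x₁ x₂, h (t, x₁ * x₂) = h (t, x₁) * h (t, x₂))
    (hone : ∀ t, ContinuousAt h (t, 1)) : Continuous h := by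
  refine continuous_iff_continuousAt.2 fun ⟨t₀, x₀⟩ => ?_
  have hshift : ContinuousAt (fun p : T × X => h (p.1, x₀⁻¹ * p.2)) (t₀, x₀) :=
    ContinuousAt.comp (g := h) (by simpa using hone t₀) (by fun_prop)
  refine (((hcont x₀).continuousAt.comp continuousAt_fst).mul hshift).congr
    (Eventually.of_forall fun p => ?_)
  simp [← hhom]

end

theorem CoNamioka.somewhereEquicontinuousAt {T : Type u} {X : Type v} {Y : Type*}
    [TopologicalSpace T] [TopologicalSpace X] [BaireSpace X] [Nonempty X] [Group Y]
    [TopologicalSpace Y] [IsTopologicalGroup Y] (hT : CoNamioka.{u, v} T) {h : T × X → Y}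
    (hcont₁ : ∀ t, Continuous fun x => h (t, x)) (hcont₂ : ∀ x, Continuous fun t => h (t, x))
    (t₀ : T) : SomewhereEquicontinuousAt h t₀ := by
  intro W hW
  obtain ⟨f, hf, hf_one, hf_compl⟩ := CompletelyRegularSpace.completely_regular_isOpen (1 : Y)
    (interior W) isOpen_interior (mem_interior_iff_mem_nhds.2 hW)
  let Ψ : T × X → ℝ := fun p => f (h p / h (t₀, p.2))
  obtain ⟨G, hG, -, hΨ⟩ := hT X inferInstance inferInstance Ψ
    (fun t => continuous_subtype_val.comp (hf.comp ((hcont₁ t).div' (hcont₁ t₀))))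
    (fun x => continuous_subtype_val.comp
      (hf.comp ((hcont₂ x).div' (continuous_const (y := h (t₀, x))))))
  obtain ⟨g, hg⟩ := hG.nonempty
  have hΨ_lt : ∀ᶠ p in 𝓝 (t₀, g), Ψ p < 1 :=
    (hΨ t₀ g hg).eventually_lt continuousAt_const (by simp [Ψ, hf_one])
  refine ⟨g, hΨ_lt.mono fun p hp => interior_subset (not_not.1 fun hpW => ?_)⟩
  simp [Ψ, hf_compl hpW] at hp

theorem jointly_continuous_on_coNamioka_compact_general {T : Type u} {X : Type u} {Y : Type u}
    [TopologicalSpace T]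
    [Group X] [TopologicalSpace X] [IsTopologicalGroup X] [BaireSpace X]
    [Group Y] [TopologicalSpace Y] [IsTopologicalGroup Y]
    (K : Set T) (hKcN : CoNamioka.{u,u} K)
    (h : T × X → Y)
    (hcont₁ : ∀ t : T, Continuous fun x : X => h (t, x))
    (hcont₂ : ∀ x : X, Continuous fun t : T => h (t, x))
    (hhom : ∀ t : T, ∀ x₁ x₂ : X, h (t, x₁ * x₂) = h (t, x₁) * h (t, x₂)) :
    ContinuousOn h (K ×ˢ (Set.univ : Set X)) := by
  let H : K × X → Y := fun p => h (p.1, p.2)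
  have hcont₁K : ∀ t : K, Continuous fun x => H (t, x) := fun t => hcont₁ t
  have hcont₂K : ∀ x, Continuous fun t : K => H (t, x) :=
    fun x => (hcont₂ x).comp continuous_subtype_val
  have hhomK : ∀ (t : K) x₁ x₂, H (t, x₁ * x₂) = H (t, x₁) * H (t, x₂) := fun t => hhom t
  have hH : Continuous H := continuous_of_continuousAt_one_of_map_mul hcont₂K hhomK fun t =>
    (hKcN.somewhereEquicontinuousAt hcont₁K hcont₂K t).continuousAt_one
      (hcont₁K t).continuousAt hhomK
  rw [continuousOn_iff_continuous_domRestrict]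
  exact hH.comp (f := fun q : ↥(K ×ˢ (univ : Set X)) => ((⟨q.1.1, q.2.1⟩ : K), q.1.2))
    (by fun_prop)

theorem jointly_continuous_on_coNamioka_compact {T : Type u} {X : Type u} {Y : Type u}
    [TopologicalSpace T]
    [Group X] [TopologicalSpace X] [IsTopologicalGroup X] [BaireSpace X]
    [Group Y] [TopologicalSpace Y] [IsTopologicalGroup Y]
    (K : Set T) (hK : IsCompact K) (hKcN : CoNamioka.{u,u} K)
    (h : T × X → Y)
    (hcont₁ : ∀ t : T, Continuous fun x : X => h (t, x))
    (hcont₂ : ∀ x : X, Continuous fun t : T => h (t, x))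
    (hhom : ∀ t : T, ∀ x₁ x₂ : X, h (t, x₁ * x₂) = h (t, x₁) * h (t, x₂)) :
    ContinuousOn h (K ×ˢ (Set.univ : Set X)) :=
  jointly_continuous_on_coNamioka_compact_general K hKcN h hcont₁ hcont₂ hhom
end

section
/- Let X be a semitopological R-module over a topological ring R and B ⊆ X an R-bounded subset. Then the multiplication map R × B → X, (r,x) ↦ r*x, is jointly continuous. -/
/-!
Near `(r₀, x₀)` write `r • x = (r - r₀) • x + r₀ • x`. Boundedness of `B` makes `r • x → 0` as
`r → 0` uniformly in `x ∈ B`, so the first term tends to `0`; the second tends to `r₀ • x₀` by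
continuity of `x ↦ r₀ • x`.
-/

open Filter Topology

theorem tendsto_smul_nhds_zero_prod_principal {R X : Type*} [Zero R] [TopologicalSpace R]
    [Zero X] [TopologicalSpace X] [SMul R X] {B : Set X}
    (hbounded : ∀ U ∈ 𝓝 (0 : X), ∃ V ∈ 𝓝 (0 : R), ∀ r ∈ V, ∀ x ∈ B, r • x ∈ U) :
    Tendsto (fun p : R × X => p.1 • p.2) (𝓝 0 ×ˢ 𝓟 B) (𝓝 0) := by
  intro U hU
  obtain ⟨V, hV, hVB⟩ := hbounded U hU
  exact mem_prod_iff.2 ⟨V, hV, B, mem_principal_self B, fun p hp => hVB _ hp.1 _ hp.2⟩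

theorem continuousOn_smul_of_RBounded_general {R X : Type*}
    [Ring R] [TopologicalSpace R] [IsTopologicalRing R]
    [AddCommGroup X] [TopologicalSpace X] [IsTopologicalAddGroup X]
    [Module R X]
    (hsep₁ : ∀ r : R, Continuous fun x : X => r • x)
    (B : Set X)
    (hbounded : ∀ U ∈ nhds (0 : X), ∃ V ∈ nhds (0 : R), ∀ r ∈ V, ∀ x ∈ B, r • x ∈ U) :
    ContinuousOn (fun p : R × X => p.1 • p.2) ((Set.univ : Set R) ×ˢ B) := by
  rintro ⟨r₀, x₀⟩ -
  rw [ContinuousWithinAt, nhdsWithin_prod_eq, nhdsWithin_univ]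
  have hshift : Tendsto (fun p : R × X => (p.1 - r₀) • p.2) (𝓝 r₀ ×ˢ 𝓝[B] x₀) (𝓝 0) :=
    (tendsto_smul_nhds_zero_prod_principal hbounded).comp
      ((tendsto_sub_nhds_zero_iff.2 tendsto_id).prodMap (tendsto_id'.2 inf_le_right))
  have hbase : Tendsto (fun p : R × X => r₀ • p.2) (𝓝 r₀ ×ˢ 𝓝[B] x₀) (𝓝 (r₀ • x₀)) :=
    ((hsep₁ r₀).tendsto x₀).comp (tendsto_snd.mono_right nhdsWithin_le_nhds)
  simpa only [sub_smul, sub_add_cancel, zero_add] using hshift.add hbase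

theorem continuousOn_smul_of_RBounded {R X : Type*}
    [Ring R] [TopologicalSpace R] [IsTopologicalRing R]
    [AddCommGroup X] [TopologicalSpace X] [IsTopologicalAddGroup X] [T2Space X]
    [Module R X]
    (hsep₁ : ∀ r : R, Continuous fun x : X => r • x)
    (hsep₂ : ∀ x : X, Continuous fun r : R => r • x)
    (B : Set X)
    (hbounded : ∀ U ∈ nhds (0 : X), ∃ V ∈ nhds (0 : R), ∀ r ∈ V, ∀ x ∈ B, r • x ∈ U) :
    ContinuousOn (fun p : R × X => p.1 • p.2) ((Set.univ : Set R) ×ˢ B) :=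
  continuousOn_smul_of_RBounded_general hsep₁ B hbounded
end

section
/- Let X be a semitopological module over a topological ring R, and suppose every neighborhood of zero in the Bohr modification X^♭ contains a set of the form h⁻¹(W−W) for a continuous homomorphism h : X → H into a compact Hausdorff abelian group H and a neighborhood W of zero in H. Then for every neighborhood U of zero in X^♭ there exists n ∈ ℕ such that for every subset A ⊆ R with |A| ≥ n and every x ∈ X there exist distinct a, b ∈ A with (a−b)*x ∈ U. -/
/-!
By compactness, `H` is covered by finitely many translates `c + W`, say `m` of them. Among any
`m + 1` points `h (a • x)`, two lie in the same translate, so that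
`h ((a - b) • x) = h (a • x) - h (b • x) ∈ W - W` and hence `(a - b) • x ∈ U`.
No Haar measure is needed: this pigeonhole argument replaces the disjoint-translates count.
-/

open Pointwise

/-- A witness that the set `U` contains `h ⁻¹' (W - W)` for a continuous additive homomorphism
`h : X → H` into a compact Hausdorff abelian topological group `H` and a neighborhood `W` of
zero in `H`. -/
structure CompactGroupWitness (X : Type*) [AddCommGroup X] [TopologicalSpace X]
    (U : Set X) where
  H : Type
  [tH : TopologicalSpace H]
  [gH : AddCommGroup H]
  [tgH : IsTopologicalAddGroup H]
  [cH : CompactSpace H]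
  [t2H : T2Space H]
  h : X → H
  cont : Continuous h
  add : ∀ a b : X, h (a + b) = h a + h b
  W : Set H
  Wnhds : W ∈ nhds (0 : H)
  sub : h ⁻¹' {z : H | ∃ w₁ ∈ W, ∃ w₂ ∈ W, z = w₁ - w₂} ⊆ U

open Finset in
theorem exists_card_forall_exists_ne_sub_mem_sub {H ι : Type*} [AddCommGroup H]
    [TopologicalSpace H] [IsTopologicalAddGroup H] [CompactSpace H] {W : Set H} (hW : W ∈ nhds 0) :
    ∃ n : ℕ, ∀ (s : Finset ι) (g : ι → H), n ≤ #s →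
      ∃ i ∈ s, ∃ j ∈ s, i ≠ j ∧ g i - g j ∈ W - W := by
  obtain ⟨t, ht⟩ := compact_covered_by_add_left_translates isCompact_univ
    ⟨0, mem_interior_iff_mem_nhds.2 hW⟩
  have hcover : ∀ y : H, ∃ c ∈ t, c + y ∈ W := fun y => by
    simpa using ht (Set.mem_univ y)
  choose! c hct hcW using hcover
  refine ⟨#t + 1, fun s g hs => ?_⟩
  obtain ⟨i, hi, j, hj, hij, hcij⟩ := exists_ne_map_eq_of_card_lt_of_maps_to
    (f := fun k => c (g k)) (Nat.lt_of_succ_le hs) fun k _ => hct (g k)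
  have hmem := Set.sub_mem_sub (hcW (g i)) (hcW (g j))
  rw [hcij, add_sub_add_left_eq_sub] at hmem
  exact ⟨i, hi, j, hj, hij, hmem⟩

theorem bohr_multiplicatively_bounded_general {R X : Type*}
    [Ring R]
    [AddCommGroup X] [TopologicalSpace X] [Module R X]
    (tb : TopologicalSpace X)
    (hbasis : ∀ U ∈ @nhds X tb 0, Nonempty (CompactGroupWitness X U)) :
    ∀ U ∈ @nhds X tb 0, ∃ n : ℕ, ∀ A : Finset R, n ≤ A.card → ∀ x : X,
      ∃ a ∈ A, ∃ b ∈ A, a ≠ b ∧ (a - b) • x ∈ U := by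
  intro U hU
  obtain ⟨H, h, -, hadd, W, hW, hsub⟩ := (hbasis U hU).some
  obtain ⟨n, hn⟩ := exists_card_forall_exists_ne_sub_mem_sub (ι := R) hW
  refine ⟨n, fun A hA x => ?_⟩
  let φ : X →+ H := AddMonoidHom.mk' h hadd
  obtain ⟨a, ha, b, hb, hab, w₁, hw₁, w₂, hw₂, hw⟩ := hn A (fun r => φ (r • x)) hA
  refine ⟨a, ha, b, hb, hab, hsub ⟨w₁, hw₁, w₂, hw₂, ?_⟩⟩
  change φ ((a - b) • x) = w₁ - w₂
  rw [sub_smul, map_sub]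
  exact hw.symm

theorem bohr_multiplicatively_bounded {R X : Type*}
    [Ring R] [TopologicalSpace R] [IsTopologicalRing R]
    [AddCommGroup X] [TopologicalSpace X] [IsTopologicalAddGroup X] [T2Space X] [Module R X]
    (hsep₁ : ∀ r : R, Continuous fun x : X => r • x)
    (hsep₂ : ∀ x : X, Continuous fun r : R => r • x)
    (tb : TopologicalSpace X) (htb : @IsTopologicalAddGroup X tb _)
    (hbasis : ∀ U ∈ @nhds X tb 0, Nonempty (CompactGroupWitness X U)) :
    ∀ U ∈ @nhds X tb 0, ∃ n : ℕ, ∀ A : Finset R, n ≤ A.card → ∀ x : X,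
      ∃ a ∈ A, ∃ b ∈ A, a ≠ b ∧ (a - b) • x ∈ U :=
  bohr_multiplicatively_bounded_general tb hbasis
end

section
/- Let R be a crowded topological ring (every neighborhood of zero contains an invertible element) and 𝓑 a bornology on R. For any topological R-module X (scalar multiplication jointly continuous), the identity map X^{♯𝓑} → X is a homeomorphism; equivalently, for every neighborhood U of zero in X and every bounded set B ⊆ R, the set U/B = {x ∈ U : B*x ⋐ U} is a neighborhood of zero in X. -/
/-- For `U ⊆ X` and `B ⊆ R`, the set `U/B = {x ∈ U : B*x ⋐ U}`, where `A ⋐ U` means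
`A + V ⊆ U` for some neighborhood `V` of zero. -/
def modDiv {R X : Type*} [SMul R X] [Add X] [Zero X] [TopologicalSpace X]
    (U : Set X) (B : Set R) : Set X :=
  {x ∈ U | ∃ V ∈ nhds (0 : X), ∀ b ∈ B, ∀ v ∈ V, b • x + v ∈ U}

/-!
Continuity of scalar multiplication at `(0, 0)` gives `W • U₁ ⊆ U₂`, boundedness of `B` gives
`B * V ⊆ W`, and crowdedness a unit `u ∈ V`. Then `B • (u⁻¹ • U₁) = (B * u) • U₁ ⊆ U₂`, so all of
`B` maps one neighborhood of zero into `U₂`; with `U₂ + U₂ ⊆ U` this is what `U/B` asks for.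
-/

open Filter Topology

theorem exists_nhds_zero_forall_smul_mem_of_crowded {R X : Type*}
    [MonoidWithZero R] [TopologicalSpace R] [Zero X] [TopologicalSpace X]
    [MulActionWithZero R X] [ContinuousSMul R X]
    (hcrowded : ∀ U ∈ 𝓝 (0 : R), ∃ x ∈ U, IsUnit x) {B : Set R}
    (hB : ∀ W ∈ 𝓝 (0 : R), ∃ V ∈ 𝓝 (0 : R), ∀ b ∈ B, ∀ v ∈ V, b * v ∈ W)
    {U : Set X} (hU : U ∈ 𝓝 0) :
    ∃ N ∈ 𝓝 (0 : X), ∀ b ∈ B, ∀ x ∈ N, b • x ∈ U := by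
  have hsmul : (fun p : R × X => p.1 • p.2) ⁻¹' U ∈ 𝓝 ((0 : R), (0 : X)) :=
    continuous_smul.continuousAt.preimage_mem_nhds (by simpa using hU)
  obtain ⟨W, hW, U₁, hU₁, hWU₁⟩ := mem_nhds_prod_iff.1 hsmul
  obtain ⟨V, hV, hBV⟩ := hB W hW
  obtain ⟨_, hu, u, rfl⟩ := hcrowded V hV
  refine ⟨(((u⁻¹ : Rˣ) : R) • ·) ⁻¹' U₁,
    (continuous_const_smul _).continuousAt.preimage_mem_nhds (by simpa using hU₁),
    fun b hb x hx => ?_⟩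
  have hx_eq : b • x = (b * u) • (((u⁻¹ : Rˣ) : R) • x) := by
    rw [smul_smul, mul_assoc, Units.mul_inv, mul_one]
  exact hx_eq ▸ hWU₁ (Set.mk_mem_prod (hBV b hb u hu) hx)

theorem modDiv_mem_nhds_of_forall_smul_mem {R X : Type*} [SMul R X] [AddCommMonoid X]
    [TopologicalSpace X] [ContinuousAdd X] {U : Set X} {B : Set R} (hU : U ∈ 𝓝 0)
    (hB : ∀ U' ∈ 𝓝 (0 : X), ∃ N ∈ 𝓝 (0 : X), ∀ b ∈ B, ∀ x ∈ N, b • x ∈ U') :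
    modDiv U B ∈ 𝓝 0 := by
  obtain ⟨U₂, hU₂, hU₂_add⟩ := exists_nhds_zero_half hU
  obtain ⟨N, hN, hBN⟩ := hB U₂ hU₂
  exact mem_of_superset (inter_mem hU hN) fun x hx =>
    ⟨hx.1, U₂, hU₂, fun b hb v hv => hU₂_add _ (hBN b hb x hx.2) v hv⟩

theorem modDiv_mem_nhds_of_crowded_general {R X : Type*}
    [Ring R] [TopologicalSpace R]
    [AddCommGroup X] [TopologicalSpace X] [IsTopologicalAddGroup X] [Module R X]
    (hcrowded : ∀ U ∈ nhds (0 : R), ∃ x ∈ U, IsUnit x)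
    (hcont : Continuous fun p : R × X => p.1 • p.2) :
    ∀ U ∈ nhds (0 : X), ∀ B : Set R,
      (∀ W ∈ nhds (0 : R), ∃ V ∈ nhds (0 : R), ∀ b ∈ B, ∀ v ∈ V, b * v ∈ W) →
      modDiv U B ∈ nhds (0 : X) := by
  intro U hU B hB
  have : ContinuousSMul R X := ⟨hcont⟩
  exact modDiv_mem_nhds_of_forall_smul_mem hU fun _ hU' =>
    exists_nhds_zero_forall_smul_mem_of_crowded hcrowded hB hU'

theorem modDiv_mem_nhds_of_crowded {R X : Type*}
    [Ring R] [TopologicalSpace R] [IsTopologicalRing R]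
    [AddCommGroup X] [TopologicalSpace X] [IsTopologicalAddGroup X] [T2Space X] [Module R X]
    (hcrowded : ∀ U ∈ nhds (0 : R), ∃ x ∈ U, IsUnit x)
    (hcont : Continuous fun p : R × X => p.1 • p.2) :
    ∀ U ∈ nhds (0 : X), ∀ B : Set R,
      (∀ W ∈ nhds (0 : R), ∃ V ∈ nhds (0 : R), ∀ b ∈ B, ∀ v ∈ V, b * v ∈ W) →
      modDiv U B ∈ nhds (0 : X) :=
  modDiv_mem_nhds_of_crowded_general hcrowded hcont
end

section
/- Let R be a topological ring and X a semitopological R-module which is not a topological R-module. Then the free semitopological R-module M_R(X) over the topological space X is not a topological R-module. -/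
universe u

theorem continuous_smul_of_leftInverse {R X M : Type*} [TopologicalSpace R]
    [SMul R X] [TopologicalSpace X] [SMul R M] [TopologicalSpace M]
    {i : X → M} (hi : Continuous i) (h : M →[R] X) (hh : Continuous h)
    (hhi : Function.LeftInverse h i) (hM : Continuous fun p : R × M => p.1 • p.2) :
    Continuous fun p : R × X => p.1 • p.2 := by
  have hsmul : (fun p : R × X => p.1 • p.2) = fun p => h (p.1 • i p.2) := by
    funext p
    rw [map_smul, hhi]
  rw [hsmul]
  exact hh.comp (hM.comp (continuous_fst.prodMk (hi.comp continuous_snd)))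

theorem free_semitopological_module_not_topological_general {R X M : Type u}
    [Ring R] [TopologicalSpace R]
    [AddCommGroup X] [TopologicalSpace X] [IsTopologicalAddGroup X] [T2Space X] [Module R X]
    [AddCommGroup M] [TopologicalSpace M] [Module R M]
    (hsepX₁ : ∀ r : R, Continuous fun x : X => r • x)
    (hsepX₂ : ∀ x : X, Continuous fun r : R => r • x)
    (hXnot : ¬ Continuous fun p : R × X => p.1 • p.2)
    (i : X → M) (hi : Continuous i)
    (hfree : ∀ (Y : Type u) [TopologicalSpace Y] [AddCommGroup Y] [Module R Y],
      IsTopologicalAddGroup Y → T2Space Y →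
      (∀ r : R, Continuous fun y : Y => r • y) →
      (∀ y : Y, Continuous fun r : R => r • y) →
      ∀ f : X → Y, Continuous f →
        ∃! g : M →ₗ[R] Y, Continuous g ∧ ∀ x : X, g (i x) = f x) :
    ¬ Continuous fun p : R × M => p.1 • p.2 := by
  intro hM
  obtain ⟨h, ⟨hh, hhi⟩, -⟩ :=
    hfree X inferInstance inferInstance hsepX₁ hsepX₂ id continuous_id
  exact hXnot (continuous_smul_of_leftInverse hi h.toMulActionHom hh hhi hM)

theorem free_semitopological_module_not_topological {R X M : Type u}
    [Ring R] [TopologicalSpace R] [IsTopologicalRing R]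
    [AddCommGroup X] [TopologicalSpace X] [IsTopologicalAddGroup X] [T2Space X] [Module R X]
    [AddCommGroup M] [TopologicalSpace M] [IsTopologicalAddGroup M] [T2Space M] [Module R M]
    (hsepX₁ : ∀ r : R, Continuous fun x : X => r • x)
    (hsepX₂ : ∀ x : X, Continuous fun r : R => r • x)
    (hXnot : ¬ Continuous fun p : R × X => p.1 • p.2)
    (hsepM₁ : ∀ r : R, Continuous fun m : M => r • m)
    (hsepM₂ : ∀ m : M, Continuous fun r : R => r • m)
    (i : X → M) (hi : Continuous i)
    (hfree : ∀ (Y : Type u) [TopologicalSpace Y] [AddCommGroup Y] [Module R Y],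
      IsTopologicalAddGroup Y → T2Space Y →
      (∀ r : R, Continuous fun y : Y => r • y) →
      (∀ y : Y, Continuous fun r : R => r • y) →
      ∀ f : X → Y, Continuous f →
        ∃! g : M →ₗ[R] Y, Continuous g ∧ ∀ x : X, g (i x) = f x) :
    ¬ Continuous fun p : R × M => p.1 • p.2 :=
  free_semitopological_module_not_topological_general hsepX₁ hsepX₂ hXnot i hi hfree
end
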